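/- If (y₁, y₂) is a pair of twice continuously differentiable functions on [0,1] satisfying the coupled Euler–Lagrange system y₁'' + 2a y₂' + b y₁ = 0 and y₂'' + 2a y₁' + b y₂ = 0 with y₁(0) = y₂(0) = α and y₁(1) = y₂(1) = β, and if b - a² ≠ m²π² for all integers m, then y₁ = y₂ and the common function y = y₁ = y₂ satisfies y'' + 2a y' + b y = 0 with y(0)=α, y(1)=β. -/

import Mathlib

/-!
The difference `u = y₁ - y₂` solves `u'' - 2a u' + b u = 0` with `u 0 = u 1 = 0`, and
`w = e^{-ax} u` removes the first-order term: `w'' + (b - a²) w = 0`, `w 0 = w 1 = 0`.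
By uniqueness for the linear system satisfied by `(w, w')`, a solution of `w'' + k w = 0`
with `w 0 = 0` is `w'(0)` times the sine solution `s` (`sin (√k x) / √k`, or `sinh` when
`k < 0`), and `s 1 ≠ 0` exactly when `k ≠ m²π²`. Hence `w = 0`, so `y₁ = y₂`, and the first
equation becomes the damped oscillator for `y₁`.
-/

open Set Real

theorem eqOn_zero_of_harmonic_initial {k T : ℝ} {w w' : ℝ → ℝ}
    (hw : ∀ x ∈ Icc 0 T, HasDerivAt w (w' x) x)
    (hw' : ∀ x ∈ Icc 0 T, HasDerivAt w' (-k * w x) x)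
    (h0 : w 0 = 0) (h0' : w' 0 = 0) : EqOn w 0 (Icc 0 T) := by
  let L : ℝ × ℝ →L[ℝ] ℝ × ℝ :=
    (ContinuousLinearMap.snd ℝ ℝ ℝ).prod (-k • ContinuousLinearMap.fst ℝ ℝ ℝ)
  have hsol : ∀ x ∈ Icc 0 T, HasDerivAt (fun x => (w x, w' x)) (L (w x, w' x)) x :=
    fun x hx => (hw x hx).prodMk (hw' x hx)
  have hzero : ∀ x : ℝ, HasDerivAt (fun _ => (0 : ℝ × ℝ)) (L 0) x := by
    simpa using fun x => hasDerivAt_const x (0 : ℝ × ℝ)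
  have hunique := ODE_solution_unique_of_mem_Icc_right (v := fun _ => L) (s := fun _ => univ)
    (fun _ _ => L.lipschitz.lipschitzOnWith)
    (HasDerivAt.continuousOn hsol)
    (fun x hx => (hsol x (Ico_subset_Icc_self hx)).hasDerivWithinAt) (fun _ _ => mem_univ _)
    continuousOn_const (fun x _ => (hzero x).hasDerivWithinAt) (fun _ _ => mem_univ _)
    (by simp [h0, h0'])
  exact fun x hx => congrArg Prod.fst (hunique hx)

theorem exists_harmonic_sine_solution {k : ℝ} (hk : ∀ m : ℤ, k ≠ (m : ℝ) ^ 2 * π ^ 2) :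
    ∃ s s' : ℝ → ℝ, (∀ x, HasDerivAt s (s' x) x) ∧ (∀ x, HasDerivAt s' (-k * s x) x) ∧
      s 0 = 0 ∧ s' 0 = 1 ∧ s 1 ≠ 0 := by
  rcases lt_trichotomy k 0 with hneg | hzero | hpos
  · set ω := √(-k)
    have hω : 0 < ω := sqrt_pos.mpr (neg_pos.mpr hneg)
    have hω2 : -k = ω ^ 2 := (sq_sqrt (neg_nonneg.mpr hneg.le)).symm
    refine ⟨fun x => sinh (ω * x) / ω, fun x => cosh (ω * x), fun x => ?_, fun x => ?_,
      by simp, by simp, by simpa using div_ne_zero (sinh_pos_iff.mpr hω).ne' hω.ne'⟩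
    · exact ((hasDerivAt_const_mul ω).sinh.div_const ω).congr_deriv (by field_simp)
    · exact (hasDerivAt_const_mul ω).cosh.congr_deriv (by rw [hω2]; field_simp)
  · exact absurd hzero (by simpa using hk 0)
  · set ω := √k
    have hω : 0 < ω := sqrt_pos.mpr hpos
    have hω2 : k = ω ^ 2 := (sq_sqrt hpos.le).symm
    refine ⟨fun x => sin (ω * x) / ω, fun x => cos (ω * x), fun x => ?_, fun x => ?_,
      by simp, by simp, div_ne_zero (fun hsin => ?_) hω.ne'⟩
    · exact ((hasDerivAt_const_mul ω).sin.div_const ω).congr_deriv (by field_simp)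
    · exact (hasDerivAt_const_mul ω).cos.congr_deriv (by rw [hω2]; field_simp)
    · obtain ⟨m, hm⟩ := sin_eq_zero_iff.mp (by simpa using hsin)
      exact hk m (by rw [hω2, ← hm]; ring)

theorem eqOn_zero_of_harmonic_dirichlet {k : ℝ} (hk : ∀ m : ℤ, k ≠ (m : ℝ) ^ 2 * π ^ 2)
    {w w' : ℝ → ℝ} (hw : ∀ x ∈ Icc 0 1, HasDerivAt w (w' x) x)
    (hw' : ∀ x ∈ Icc 0 1, HasDerivAt w' (-k * w x) x) (h0 : w 0 = 0) (h1 : w 1 = 0) :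
    EqOn w 0 (Icc 0 1) := by
  obtain ⟨s, s', hs, hs', hs0, hs'0, hs1⟩ := exists_harmonic_sine_solution hk
  have hdiff : EqOn (fun x => w x - w' 0 * s x) 0 (Icc 0 1) :=
    eqOn_zero_of_harmonic_initial (w' := fun x => w' x - w' 0 * s' x)
      (fun x hx => (hw x hx).sub ((hs x).const_mul _))
      (fun x hx => ((hw' x hx).sub ((hs' x).const_mul _)).congr_deriv (by ring))
      (by simp [h0, hs0]) (by simp [hs'0])
  have hslope : w' 0 = 0 := by
    have := hdiff (right_mem_Icc.mpr zero_le_one)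
    simp only [h1, Pi.zero_apply, zero_sub, neg_eq_zero, mul_eq_zero] at this
    exact this.resolve_right hs1
  intro x hx
  simpa [hslope] using hdiff hx

section DampedToHarmonic

variable {a b : ℝ} {u u' : ℝ → ℝ} {x : ℝ}

theorem hasDerivAt_exp_neg_mul (hu : HasDerivAt u (u' x) x) :
    HasDerivAt (fun x => exp (-a * x) * u x) (exp (-a * x) * (u' x - a * u x)) x :=
  ((hasDerivAt_const_mul (-a)).exp.mul hu).congr_deriv (by ring)

theorem hasDerivAt_exp_neg_mul_of_damped (hu : HasDerivAt u (u' x) x)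
    (hu' : HasDerivAt u' (2 * a * u' x - b * u x) x) :
    HasDerivAt (fun x => exp (-a * x) * (u' x - a * u x))
      (-(b - a ^ 2) * (exp (-a * x) * u x)) x :=
  ((hasDerivAt_const_mul (-a)).exp.mul (hu'.fun_sub (hu.const_mul a))).congr_deriv (by ring)

end DampedToHarmonic

/-- Solutions of the coupled Euler–Lagrange system
`y₁'' + 2a y₂' + b y₁ = 0`, `y₂'' + 2a y₁' + b y₂ = 0` with common
boundary values coincide (under the non-resonance condition), and the
common function solves the original damped oscillator problem. -/
theorem coupled_euler_lagrange_reduces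
    (a b α β : ℝ) (y₁ y₂ : ℝ → ℝ)
    (h1 : ContDiff ℝ 2 y₁) (h2 : ContDiff ℝ 2 y₂)
    (hode1 : ∀ x ∈ Set.Ioo (0:ℝ) 1,
      deriv (deriv y₁) x + 2 * a * deriv y₂ x + b * y₁ x = 0)
    (hode2 : ∀ x ∈ Set.Ioo (0:ℝ) 1,
      deriv (deriv y₂) x + 2 * a * deriv y₁ x + b * y₂ x = 0)
    (hb10 : y₁ 0 = α) (hb20 : y₂ 0 = α)
    (hb11 : y₁ 1 = β) (hb21 : y₂ 1 = β)
    (hres : ∀ m : ℤ, b - a ^ 2 ≠ (m : ℝ) ^ 2 * Real.pi ^ 2) :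
    (∀ x ∈ Set.Icc (0:ℝ) 1, y₁ x = y₂ x) ∧
    (∀ x ∈ Set.Ioo (0:ℝ) 1,
      deriv (deriv y₁) x + 2 * a * deriv y₁ x + b * y₁ x = 0) ∧
    y₁ 0 = α ∧ y₁ 1 = β := by
  set u := fun x => y₁ x - y₂ x
  set u' := fun x => deriv y₁ x - deriv y₂ x
  have hu : ∀ x, HasDerivAt u (u' x) x := fun x =>
    (h1.differentiable two_ne_zero x).hasDerivAt.sub (h2.differentiable two_ne_zero x).hasDerivAt
  have hode : EqOn (fun x => deriv (deriv y₁) x - deriv (deriv y₂) x)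
      (fun x => 2 * a * u' x - b * u x) (Icc 0 1) := by
    have hopen : EqOn (fun x => deriv (deriv y₁) x - deriv (deriv y₂) x)
        (fun x => 2 * a * u' x - b * u x) (Ioo 0 1) := fun x hx => by
      linarith [hode1 x hx, hode2 x hx]
    have hy₁' := h1.continuous_deriv one_le_two
    have hy₂' := h2.continuous_deriv one_le_two
    have hy₁'' := (h1.deriv' (n := 1)).continuous_deriv_one
    have hy₂'' := (h2.deriv' (n := 1)).continuous_deriv_one
    rw [← closure_Ioo zero_ne_one]
    exact hopen.closure (by fun_prop) (by fun_prop)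
  have hu' : ∀ x ∈ Icc 0 1, HasDerivAt u' (2 * a * u' x - b * u x) x := fun x hx =>
    ((h1.differentiable_deriv_two x).hasDerivAt.sub
      (h2.differentiable_deriv_two x).hasDerivAt).congr_deriv (hode hx)
  have hw := eqOn_zero_of_harmonic_dirichlet hres (fun x _ => hasDerivAt_exp_neg_mul (hu x))
    (fun x hx => hasDerivAt_exp_neg_mul_of_damped (hu x) (hu' x hx))
    (by simp [u, hb10, hb20]) (by simp [u, hb11, hb21])
  have heq : ∀ x ∈ Icc 0 1, y₁ x = y₂ x := fun x hx => by
    simpa [u, exp_ne_zero, sub_eq_zero] using hw hx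
  refine ⟨heq, fun x hx => ?_, hb10, hb11⟩
  have hderiv : deriv y₁ x = deriv y₂ x :=
    (Filter.eventuallyEq_of_mem (Ioo_mem_nhds hx.1 hx.2)
      fun y hy => heq y (Ioo_subset_Icc_self hy)).deriv_eq
  rw [hderiv]
  exact hode1 x hx
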